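/- Let p : ℝⁿ ⇀ 𝕋 be continuous and f, g : ℝⁿ ⇀ ℝᵐ have open domains. Then the reverse-mode differential of the conditional satisfies d^r(Cond_{n,m}(p,f,g)) = Cond_{(n+m),n}(p ∘ π₁, d^r f, d^r g). -/

import Mathlib

open scoped Classical

noncomputable section

instance {X Y : Type*} : PartialOrder (PFun X Y) :=
  inferInstanceAs (PartialOrder (X → Part Y))

/-- Partial functions `ℝⁿ ⇀ ℝᵐ`. -/
abbrev PF (n m : ℕ) := PFun (Fin n → ℝ) (Fin m → ℝ)

/-- A partial function between topological spaces is continuous if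
preimages of open sets are open. -/
def PCont {X Y : Type*} [TopologicalSpace X] [TopologicalSpace Y] (f : PFun X Y) : Prop :=
  ∀ B : Set Y, IsOpen B → IsOpen (f.preimage B)

/-- Total extension of a partial function (junk value `0` off the domain);
since domains are open, all local differential notions are independent of the junk). -/
def pext {n m : ℕ} (f : PF n m) : (Fin n → ℝ) → (Fin m → ℝ) :=
  fun x => if h : (f x).Dom then (f x).get h else 0

/-- The Jacobian of `f` is defined at `x`: `x ∈ Dom f` and all partial derivatives
of all components of `f` exist at `x`. -/
def JacDefined {n m : ℕ} (f : PF n m) (x : Fin n → ℝ) : Prop :=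
  x ∈ f.Dom ∧ ∀ (i : Fin m) (j : Fin n),
    DifferentiableAt ℝ (fun t : ℝ => pext f (x + t • (Pi.single j 1 : Fin n → ℝ)) i) 0

/-- The Jacobian matrix `J_x(f)` (junk entries where undefined). -/
def jac {n m : ℕ} (f : PF n m) (x : Fin n → ℝ) : Matrix (Fin m) (Fin n) ℝ :=
  fun i j => deriv (fun t : ℝ => pext f (x + t • (Pi.single j 1 : Fin n → ℝ)) i) 0

/-- First component of a concatenated vector. -/
def vleft (n k : ℕ) (z : Fin (n + k) → ℝ) : Fin n → ℝ := fun i => z (Fin.castAdd k i)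
/-- Second component of a concatenated vector. -/
def vright (n k : ℕ) (z : Fin (n + k) → ℝ) : Fin k → ℝ := fun j => z (Fin.natAdd n j)

/-- Forward differential `d(f) : ℝⁿ ×̇ ℝⁿ ⇀ ℝᵐ`, `d(f)(x,y) ≃ J_x(f)·y`. -/
def fdiff {n m : ℕ} (f : PF n m) : PF (n + n) m :=
  fun z => ⟨JacDefined f (vleft n n z),
    fun _ => (jac f (vleft n n z)).mulVec (vright n n z)⟩

/-- Reverse differential `d^r(f) : ℝⁿ ×̇ ℝᵐ ⇀ ℝⁿ`, `d^r(f)(x,y) ≃ J_x(f)ᵀ·y`. -/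
def rdiff {n m : ℕ} (f : PF n m) : PF (n + m) n :=
  fun z => ⟨JacDefined f (vleft n m z),
    fun _ => (jac f (vleft n m z)).transpose.mulVec (vright n m z)⟩

/-- Forward derivative at a point, `d_x(f) : ℝⁿ ⇀ ℝᵐ` (⊥ if the Jacobian is undefined). -/
def fdiffAt {n m : ℕ} (f : PF n m) (x : Fin n → ℝ) : PFun (Fin n → ℝ) (Fin m → ℝ) :=
  fun y => ⟨JacDefined f x, fun _ => (jac f x).mulVec y⟩

/-- Reverse derivative at a point, `d^r_x(f) : ℝᵐ ⇀ ℝⁿ` (⊥ if the Jacobian is undefined). -/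
def rdiffAt {n m : ℕ} (f : PF n m) (x : Fin n → ℝ) : PFun (Fin m → ℝ) (Fin n → ℝ) :=
  fun y => ⟨JacDefined f x, fun _ => (jac f x).transpose.mulVec y⟩

/-- `C^k` for partial functions with open domain: `C⁰` = continuous with open domain;
`C^{k+1}` = the forward differential has domain `Dom f × ℝⁿ` and is `C^k`. -/
def IsCkAux : ℕ → (n m : ℕ) → PF n m → Prop
  | 0, _, _, f => IsOpen f.Dom ∧ PCont f
  | (k+1), n, _, f => (fdiff f).Dom = {z | vleft n n z ∈ f.Dom} ∧ IsCkAux k _ _ (fdiff f)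

def IsCk (k : ℕ) {n m : ℕ} (f : PF n m) : Prop := IsCkAux k n m f

/-- PSmooth = `C^k` for all `k`. -/
def PSmooth {n m : ℕ} (f : PF n m) : Prop := ∀ k, IsCk k f

/-- Continuously differentiable: open domain, continuous, Jacobian defined
and continuous on the whole domain. -/
def ContDiffP {n m : ℕ} (f : PF n m) : Prop :=
  IsOpen f.Dom ∧ PCont f ∧ (∀ x ∈ f.Dom, JacDefined f x) ∧ ContinuousOn (jac f) f.Dom

/-- Supremum (union of graphs) of a family of partial functions. -/
def pfunSup {X Y I : Type*} (f : I → PFun X Y) : PFun X Y :=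
  fun x => ⟨∃ i, (f i x).Dom, fun h => (f (Classical.choose h) x).get (Classical.choose_spec h)⟩

/-- The conditional `Cond(p, f, g)`. -/
def pcond {X Y : Type*} (p : PFun X Bool) (f g : PFun X Y) : PFun X Y :=
  fun x =>
    ⟨(true ∈ p x ∧ (f x).Dom) ∨ (false ∈ p x ∧ (g x).Dom),
     fun h =>
       if htt : true ∈ p x then
         (f x).get (by
           rcases h with ⟨_, hf⟩ | ⟨hff, _⟩
           · exact hf
           · exact absurd (Part.mem_unique htt hff) (by simp))
       else
         (g x).get (by
           rcases h with ⟨htt', _⟩ | ⟨_, hg⟩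
           · exact absurd htt' htt
           · exact hg)⟩

end

/-! On the open set `p⁻¹(b)` the conditional coincides, as a partial function, with `f` (for
`b = tt`) or `g` (for `b = ff`), and `d^r(F)(x, y)` depends only on the germ of `F` at `x`.
Where `p x` is undefined both sides are undefined. -/

open Filter Topology

section Congr

variable {n m : ℕ} {F G : PF n m} {x : Fin n → ℝ}

theorem pext_eventuallyEq (h : ∀ᶠ y in 𝓝 x, F y = G y) : pext F =ᶠ[𝓝 x] pext G :=
  h.mono fun y hy => by simp only [pext, hy]

theorem pext_line_eventuallyEq (h : pext F =ᶠ[𝓝 x] pext G) (v : Fin n → ℝ) (i : Fin m) :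
    (fun t : ℝ => pext F (x + t • v) i) =ᶠ[𝓝 0] fun t => pext G (x + t • v) i := by
  have hline : Tendsto (fun t : ℝ => x + t • v) (𝓝 0) (𝓝 x) := by
    have hcont : Continuous fun t : ℝ => x + t • v := by fun_prop
    simpa using hcont.tendsto 0
  exact (hline.eventually h).mono fun t ht => congrFun ht i

theorem jacDefined_congr (h : ∀ᶠ y in 𝓝 x, F y = G y) : JacDefined F x ↔ JacDefined G x := by
  have hdom : x ∈ F.Dom ↔ x ∈ G.Dom := by rw [PFun.mem_dom, PFun.mem_dom, h.self_of_nhds]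
  refine and_congr hdom (forall₂_congr fun i j => ?_)
  exact (pext_line_eventuallyEq (pext_eventuallyEq h) _ i).differentiableAt_iff

theorem jac_congr (h : ∀ᶠ y in 𝓝 x, F y = G y) : jac F x = jac G x := by
  funext i j
  exact (pext_line_eventuallyEq (pext_eventuallyEq h) _ i).deriv_eq

end Congr

theorem rdiff_apply_congr {n m : ℕ} {F G : PF n m} {z : Fin (n + m) → ℝ}
    (h : ∀ᶠ y in 𝓝 (vleft n m z), F y = G y) : rdiff F z = rdiff G z :=
  Part.ext' (jacDefined_congr h) fun _ _ => by simp only [rdiff, jac_congr h]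

theorem rdiff_apply_of_notMem_dom {n m : ℕ} {F : PF n m} {z : Fin (n + m) → ℝ}
    (hz : vleft n m z ∉ F.Dom) : rdiff F z = Part.none :=
  Part.eq_none_iff'.mpr fun h => hz h.1

section Cond

variable {X Y : Type*} {p : PFun X Bool} {f g : PFun X Y} {x : X}

theorem pcond_apply_of_true_mem (hx : true ∈ p x) : pcond p f g x = f x :=
  Part.ext' ⟨by rintro (⟨-, hf⟩ | ⟨hx', -⟩); exacts [hf, absurd (Part.mem_unique hx hx') nofun],
    fun hf => Or.inl ⟨hx, hf⟩⟩ fun _ _ => dif_pos hx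

theorem pcond_apply_of_false_mem (hx : false ∈ p x) : pcond p f g x = g x := by
  have hnt : true ∉ p x := fun hx' => nomatch Part.mem_unique hx hx'
  exact Part.ext' ⟨by rintro (⟨hx', -⟩ | ⟨-, hg⟩); exacts [absurd hx' hnt, hg],
    fun hg => Or.inr ⟨hx, hg⟩⟩ fun _ _ => dif_neg hnt

theorem pcond_apply_of_not_dom (hx : ¬(p x).Dom) : pcond p f g x = Part.none :=
  Part.eq_none_iff'.mpr <| by rintro (⟨hb, -⟩ | ⟨hb, -⟩) <;> exact hx (Part.dom_iff_mem.mpr ⟨_, hb⟩)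

variable [TopologicalSpace X]

theorem pcond_eventuallyEq_of_mem (hp : PCont p) {b : Bool} (hx : b ∈ p x) :
    ∀ᶠ y in 𝓝 x, pcond p f g y = if b then f y else g y := by
  have hopen : IsOpen (p.preimage {b}) := hp {b} (isOpen_discrete _)
  filter_upwards [hopen.mem_nhds ((PFun.mem_preimage _ _ _).mpr ⟨b, rfl, hx⟩)] with y hy
  obtain ⟨b, rfl, hyb⟩ := (PFun.mem_preimage _ _ _).mp hy
  cases b
  exacts [pcond_apply_of_false_mem hyb, pcond_apply_of_true_mem hyb]

end Cond

theorem rdiff_cond_general {n m : ℕ} (p : PFun (Fin n → ℝ) Bool) (f g : PF n m)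
    (hp : PCont p) :
    rdiff (pcond p f g) = pcond (fun z => p (vleft n m z)) (rdiff f) (rdiff g) := by
  funext z
  by_cases hx : (p (vleft n m z)).Dom
  · obtain ⟨b, hmem⟩ := Part.dom_iff_mem.mp hx
    have hlocal := pcond_eventuallyEq_of_mem (f := f) (g := g) hp hmem
    cases b
    · exact (rdiff_apply_congr hlocal).trans
        (pcond_apply_of_false_mem (p := fun z => p (vleft n m z)) hmem).symm
    · exact (rdiff_apply_congr hlocal).trans
        (pcond_apply_of_true_mem (p := fun z => p (vleft n m z)) hmem).symm
  · have hnot : vleft n m z ∉ (pcond p f g).Dom := by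
      rw [PFun.mem_dom, pcond_apply_of_not_dom hx]
      exact fun ⟨_, hy⟩ => Part.notMem_none _ hy
    rw [rdiff_apply_of_notMem_dom hnot, pcond_apply_of_not_dom (p := fun z => p (vleft n m z)) hx]

/-- for a continuous partial predicate `p` and partial functions `f`, `g`
with open domains, `d^r(Cond_{n,m}(p,f,g)) = Cond_{(n+m),n}(p ∘ π₁, d^r f, d^r g)`. -/
theorem rdiff_cond {n m : ℕ} (p : PFun (Fin n → ℝ) Bool) (f g : PF n m)
    (hp : PCont p) (hf : IsOpen f.Dom) (hg : IsOpen g.Dom) :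
    rdiff (pcond p f g) = pcond (fun z => p (vleft n m z)) (rdiff f) (rdiff g) :=
  rdiff_cond_general p f g hp
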